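/- The contact distance CDF of a Thomas cluster process, F_{R_C}(r) = 1 − exp(−2πλ_p ∫₀^∞ (1 − exp(−m̄(1 − Q₁(v/σ, r/σ)))) v dv), is upper bounded by 1 − exp(−πλ_p m̄ r²) for all r ≥ 0. -/

import Mathlib

open Real MeasureTheory Set

noncomputable def besselI0 (x : ℝ) : ℝ :=
  (1 / Real.pi) * ∫ θ in (0:ℝ)..Real.pi, Real.exp (x * Real.cos θ)

noncomputable def ricePDF (σ ν u : ℝ) : ℝ :=
  (u / σ ^ 2) * Real.exp (-(u ^ 2 + ν ^ 2) / (2 * σ ^ 2)) * besselI0 (u * ν / σ ^ 2)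

noncomputable def marcumQ (α β : ℝ) : ℝ :=
  ∫ y in Set.Ioi β, y * Real.exp (-(y ^ 2 + α ^ 2) / 2) * besselI0 (α * y)

noncomputable def rayleighPDF (σ v : ℝ) : ℝ :=
  (v / σ ^ 2) * Real.exp (-v ^ 2 / (2 * σ ^ 2))

/-!
Since `1 - exp (-t) ≤ t`, it suffices to show `∫₀^∞ (1 - Q₁(v/σ, r/σ)) v dv = r² / 2`.
Write `1 - Q₁(v/σ, r/σ) = ∫₀^r f_U(u|v) du` and swap the integrals (Tonelli); the symmetry
`v f_U(u|v) = u f_U(v|u)` and the normalisation of the Rice density `f_U(·|u)` turn the double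
integral into `∫₀^r u du`. The normalisation is the Gaussian integral in polar coordinates:
`f_U(·|ν)` is the density of the norm of a planar Gaussian vector with mean `(ν, 0)` and
covariance `σ² I`, the angular integral producing the Bessel function `I₀`.
-/

open scoped NNReal
open ProbabilityTheory

@[fun_prop]
lemma continuous_besselI0 : Continuous besselI0 :=
  continuous_const.mul
    (intervalIntegral.continuous_parametric_intervalIntegral_of_continuous' (by fun_prop) _ _)

lemma besselI0_nonneg (x : ℝ) : 0 ≤ besselI0 x :=
  mul_nonneg (by positivity)
    (intervalIntegral.integral_nonneg pi_pos.le fun θ _ => (exp_pos _).le)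

lemma integral_exp_mul_cos (a : ℝ) :
    ∫ θ in (-π)..π, exp (a * cos θ) = 2 * π * besselI0 a := by
  have hint (b c : ℝ) : IntervalIntegrable (fun θ => exp (a * cos θ)) volume b c :=
    (by fun_prop : Continuous fun θ => exp (a * cos θ)).intervalIntegrable b c
  have hsymm : ∫ θ in (-π)..0, exp (a * cos θ) = ∫ θ in 0..π, exp (a * cos θ) := by
    simpa using (intervalIntegral.integral_comp_neg (a := 0) (b := π) fun θ => exp (a * cos θ)).symm
  rw [← intervalIntegral.integral_add_adjacent_intervals (hint _ 0) (hint 0 _), hsymm, besselI0]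
  field_simp
  ring

@[fun_prop]
lemma continuous_gaussianPDFReal (μ : ℝ) (v : ℝ≥0) : Continuous (gaussianPDFReal μ v) := by
  unfold gaussianPDFReal
  fun_prop

lemma lintegral_gaussianPDFReal_mul_gaussianPDFReal (μ₁ μ₂ : ℝ) {v₁ v₂ : ℝ≥0} (h₁ : v₁ ≠ 0)
    (h₂ : v₂ ≠ 0) :
    ∫⁻ p : ℝ × ℝ, ENNReal.ofReal (gaussianPDFReal μ₁ v₁ p.1 * gaussianPDFReal μ₂ v₂ p.2) = 1 := by
  simp_rw [ENNReal.ofReal_mul (gaussianPDFReal_nonneg _ _ _)]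
  rw [Measure.volume_eq_prod, lintegral_prod_mul
    (measurable_gaussianPDFReal _ _).ennreal_ofReal.aemeasurable
    (measurable_gaussianPDFReal _ _).ennreal_ofReal.aemeasurable,
    lintegral_gaussianPDFReal_eq_one _ h₁, lintegral_gaussianPDFReal_eq_one _ h₂, one_mul]

lemma mul_gaussianPDFReal_polar (ν y θ : ℝ) {v : ℝ≥0} (hv : v ≠ 0) :
    y * (gaussianPDFReal ν v (y * cos θ) * gaussianPDFReal 0 v (y * sin θ)) =
    y / v * exp (-(y ^ 2 + ν ^ 2) / (2 * v)) / (2 * π) * exp (y * ν / v * cos θ) := by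
  have hv' : (v : ℝ) ≠ 0 := mod_cast hv
  have hsqrt : √(2 * π * v) * √(2 * π * v) = 2 * π * v := mul_self_sqrt (by positivity)
  have hexp : -(y * cos θ - ν) ^ 2 / (2 * v) + -(y * sin θ - 0) ^ 2 / (2 * v) =
      -(y ^ 2 + ν ^ 2) / (2 * v) + y * ν / v * cos θ := by
    field_simp
    linear_combination (-y ^ 2) * sin_sq_add_cos_sq θ
  rw [gaussianPDFReal, gaussianPDFReal, mul_mul_mul_comm, ← exp_add, ← mul_inv, hsqrt, hexp,
    exp_add]
  field_simp

lemma integral_mul_gaussianPDFReal_polar {σ : ℝ} (hσ : σ ≠ 0) (ν y : ℝ) :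
    ∫ θ in Ioo (-π) π, y * (gaussianPDFReal ν (σ ^ 2).toNNReal (y * cos θ) *
      gaussianPDFReal 0 (σ ^ 2).toNNReal (y * sin θ)) = ricePDF σ ν y := by
  have hv : (σ ^ 2).toNNReal ≠ 0 := by simpa using hσ
  simp_rw [mul_gaussianPDFReal_polar ν y _ hv, Real.coe_toNNReal _ (sq_nonneg σ)]
  rw [← integral_Ioc_eq_integral_Ioo, ← intervalIntegral.integral_of_le (by linarith [pi_pos]),
    intervalIntegral.integral_const_mul, integral_exp_mul_cos, ricePDF]
  field_simp

@[fun_prop]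
lemma continuous_ricePDF (σ : ℝ) : Continuous fun p : ℝ × ℝ => ricePDF σ p.1 p.2 := by
  unfold ricePDF
  fun_prop

lemma ricePDF_nonneg (σ ν : ℝ) {u : ℝ} (hu : 0 ≤ u) : 0 ≤ ricePDF σ ν u := by
  have := besselI0_nonneg (u * ν / σ ^ 2)
  unfold ricePDF
  positivity

lemma lintegral_ricePDF {σ : ℝ} (hσ : σ ≠ 0) (ν : ℝ) :
    ∫⁻ u in Ioi 0, ENNReal.ofReal (ricePDF σ ν u) = 1 := by
  set v := (σ ^ 2).toNNReal
  have hv : v ≠ 0 := by simpa [v] using hσ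
  set G : ℝ × ℝ → ℝ := fun p => gaussianPDFReal ν v p.1 * gaussianPDFReal 0 v p.2
  have hG : Continuous G := by fun_prop
  have hangle : ∀ y ∈ Ioi (0 : ℝ), ∫⁻ θ in Ioo (-π) π,
      ENNReal.ofReal (y, θ).1 • ENNReal.ofReal (G (polarCoord.symm (y, θ))) =
        ENNReal.ofReal (ricePDF σ ν y) := by
    intro y hy
    simp_rw [smul_eq_mul, ← ENNReal.ofReal_mul (le_of_lt hy)]
    rw [← integral_mul_gaussianPDFReal_polar hσ ν y, ofReal_integral_eq_lintegral_ofReal]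
    · rfl
    · exact (Continuous.integrableOn_Icc (by fun_prop)).mono_set Ioo_subset_Icc_self
    · refine ae_of_all _ fun θ => ?_
      exact mul_nonneg (le_of_lt hy)
        (mul_nonneg (gaussianPDFReal_nonneg _ _ _) (gaussianPDFReal_nonneg _ _ _))
  rw [← lintegral_gaussianPDFReal_mul_gaussianPDFReal ν 0 hv hv, ← lintegral_comp_polarCoord_symm,
    polarCoord_target, Measure.volume_eq_prod, ← Measure.prod_restrict,
    lintegral_prod _ (by fun_prop)]
  exact (setLIntegral_congr_fun measurableSet_Ioi hangle).symm

lemma ae_restrict_Ioi_ricePDF_nonneg (σ ν : ℝ) : 0 ≤ᵐ[volume.restrict (Ioi 0)] ricePDF σ ν :=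
  (ae_restrict_iff' measurableSet_Ioi).2 (ae_of_all _ fun _ hu => ricePDF_nonneg σ ν (le_of_lt hu))

lemma integrableOn_ricePDF {σ : ℝ} (hσ : σ ≠ 0) (ν : ℝ) : IntegrableOn (ricePDF σ ν) (Ioi 0) := by
  refine ⟨(continuous_ricePDF σ).comp₂ continuous_const continuous_id |>.aestronglyMeasurable, ?_⟩
  rw [hasFiniteIntegral_iff_ofReal, lintegral_ricePDF hσ ν]
  · exact ENNReal.one_lt_top
  · exact ae_restrict_Ioi_ricePDF_nonneg σ ν

lemma setIntegral_ricePDF {σ : ℝ} (hσ : σ ≠ 0) (ν : ℝ) : ∫ u in Ioi 0, ricePDF σ ν u = 1 := by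
  rw [← ENNReal.ofReal_eq_one, ofReal_integral_eq_lintegral_ofReal (integrableOn_ricePDF hσ ν),
    lintegral_ricePDF hσ ν]
  exact ae_restrict_Ioi_ricePDF_nonneg σ ν

lemma marcumQ_div_eq_setIntegral_ricePDF {σ : ℝ} (hσ : 0 < σ) (ν r : ℝ) :
    marcumQ (ν / σ) (r / σ) = ∫ u in Ioi r, ricePDF σ ν u := by
  have hscale (y : ℝ) : y * exp (-(y ^ 2 + (ν / σ) ^ 2) / 2) * besselI0 (ν / σ * y) =
      σ * ricePDF σ ν (σ * y) := by
    rw [ricePDF, show σ * y * ν / σ ^ 2 = ν / σ * y by field_simp,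
      show -((σ * y) ^ 2 + ν ^ 2) / (2 * σ ^ 2) = -(y ^ 2 + (ν / σ) ^ 2) / 2 by field_simp]
    field_simp
  simp_rw [marcumQ, hscale]
  rw [integral_const_mul, integral_comp_mul_left_Ioi _ _ hσ, mul_div_cancel₀ _ hσ.ne', smul_eq_mul,
    mul_inv_cancel_left₀ hσ.ne']

lemma one_sub_marcumQ_div_eq_setIntegral_ricePDF {σ r : ℝ} (hσ : 0 < σ) (hr : 0 ≤ r) (ν : ℝ) :
    1 - marcumQ (ν / σ) (r / σ) = ∫ u in Ioc 0 r, ricePDF σ ν u := by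
  have hint := integrableOn_ricePDF hσ.ne' ν
  rw [marcumQ_div_eq_setIntegral_ricePDF hσ, ← setIntegral_ricePDF hσ.ne' ν,
    ← Ioc_union_Ioi_eq_Ioi hr, setIntegral_union (Ioc_disjoint_Ioi le_rfl) measurableSet_Ioi
      (hint.mono_set Ioc_subset_Ioi_self) (hint.mono_set (Ioi_subset_Ioi hr)), add_sub_cancel_right]

lemma one_sub_marcumQ_div_nonneg {σ r : ℝ} (hσ : 0 < σ) (hr : 0 ≤ r) (ν : ℝ) :
    0 ≤ 1 - marcumQ (ν / σ) (r / σ) := by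
  rw [one_sub_marcumQ_div_eq_setIntegral_ricePDF hσ hr]
  exact setIntegral_nonneg measurableSet_Ioc fun u hu => ricePDF_nonneg σ ν (le_of_lt hu.1)

lemma ricePDF_mul_eq_mul_ricePDF (σ u v : ℝ) : ricePDF σ v u * v = u * ricePDF σ u v := by
  simp only [ricePDF, mul_comm u v, add_comm (u ^ 2)]
  ring

lemma lintegral_ricePDF_mul {σ u : ℝ} (hσ : σ ≠ 0) (hu : 0 ≤ u) :
    ∫⁻ v in Ioi 0, ENNReal.ofReal (ricePDF σ v u * v) = ENNReal.ofReal u := by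
  simp_rw [ricePDF_mul_eq_mul_ricePDF, ENNReal.ofReal_mul hu]
  rw [lintegral_const_mul' _ _ ENNReal.ofReal_ne_top, lintegral_ricePDF hσ, mul_one]

lemma continuous_one_sub_marcumQ_div {σ r : ℝ} (hσ : 0 < σ) (hr : 0 ≤ r) :
    Continuous fun v => 1 - marcumQ (v / σ) (r / σ) := by
  simp_rw [one_sub_marcumQ_div_eq_setIntegral_ricePDF hσ hr, ← integral_Icc_eq_integral_Ioc]
  exact continuous_parametric_integral_of_continuous (continuous_ricePDF σ) isCompact_Icc

lemma lintegral_one_sub_marcumQ_div_mul {σ r : ℝ} (hσ : 0 < σ) (hr : 0 ≤ r) :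
    ∫⁻ v in Ioi 0, ENNReal.ofReal ((1 - marcumQ (v / σ) (r / σ)) * v) =
      ENNReal.ofReal (r ^ 2 / 2) := by
  have hinner : ∀ v ∈ Ioi (0 : ℝ), ENNReal.ofReal ((1 - marcumQ (v / σ) (r / σ)) * v) =
      ∫⁻ u in Ioc 0 r, ENNReal.ofReal (ricePDF σ v u * v) := by
    intro v hv
    rw [one_sub_marcumQ_div_eq_setIntegral_ricePDF hσ hr, ← integral_mul_const,
      ofReal_integral_eq_lintegral_ofReal]
    · exact (Continuous.integrableOn_Icc (by fun_prop)).mono_set Ioc_subset_Icc_self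
    · exact (ae_restrict_iff' measurableSet_Ioc).2 (ae_of_all _ fun u hu =>
        mul_nonneg (ricePDF_nonneg σ v (le_of_lt hu.1)) (le_of_lt hv))
  have hswapped : ∀ u ∈ Ioc (0 : ℝ) r,
      ∫⁻ v in Ioi 0, ENNReal.ofReal (ricePDF σ v u * v) = ENNReal.ofReal u :=
    fun u hu => lintegral_ricePDF_mul hσ.ne' (le_of_lt hu.1)
  rw [setLIntegral_congr_fun measurableSet_Ioi hinner, lintegral_lintegral_swap (by fun_prop),
    setLIntegral_congr_fun measurableSet_Ioc hswapped, ← ofReal_integral_eq_lintegral_ofReal,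
    ← intervalIntegral.integral_of_le hr, integral_id]
  · ring_nf
  · exact continuous_id.integrableOn_Icc.mono_set Ioc_subset_Icc_self
  · exact (ae_restrict_iff' measurableSet_Ioc).2 (ae_of_all _ fun u hu => le_of_lt hu.1)

lemma ae_restrict_Ioi_one_sub_marcumQ_div_mul_nonneg {σ r : ℝ} (hσ : 0 < σ) (hr : 0 ≤ r) :
    0 ≤ᵐ[volume.restrict (Ioi 0)] fun v => (1 - marcumQ (v / σ) (r / σ)) * v :=
  (ae_restrict_iff' measurableSet_Ioi).2 (ae_of_all _ fun v hv =>
    mul_nonneg (one_sub_marcumQ_div_nonneg hσ hr v) (le_of_lt hv))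

lemma integrableOn_one_sub_marcumQ_div_mul {σ r : ℝ} (hσ : 0 < σ) (hr : 0 ≤ r) :
    IntegrableOn (fun v => (1 - marcumQ (v / σ) (r / σ)) * v) (Ioi 0) := by
  refine ⟨((continuous_one_sub_marcumQ_div hσ hr).mul continuous_id).aestronglyMeasurable, ?_⟩
  rw [hasFiniteIntegral_iff_ofReal (ae_restrict_Ioi_one_sub_marcumQ_div_mul_nonneg hσ hr),
    lintegral_one_sub_marcumQ_div_mul hσ hr]
  exact ENNReal.ofReal_lt_top

lemma integral_one_sub_marcumQ_div_mul {σ r : ℝ} (hσ : 0 < σ) (hr : 0 ≤ r) :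
    ∫ v in Ioi 0, (1 - marcumQ (v / σ) (r / σ)) * v = r ^ 2 / 2 := by
  rw [integral_eq_lintegral_of_nonneg_ae (ae_restrict_Ioi_one_sub_marcumQ_div_mul_nonneg hσ hr)
    (integrableOn_one_sub_marcumQ_div_mul hσ hr).aestronglyMeasurable,
    lintegral_one_sub_marcumQ_div_mul hσ hr, ENNReal.toReal_ofReal (by positivity)]

theorem contact_cdf_upper_bound (lp m σ r : ℝ) (hlp : 0 < lp) (hm : 0 < m)
    (hσ : 0 < σ) (hr : 0 ≤ r) :
    1 - Real.exp (-2 * Real.pi * lp *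
        ∫ v in Set.Ioi (0:ℝ),
          (1 - Real.exp (-m * (1 - marcumQ (v / σ) (r / σ)))) * v) ≤
      1 - Real.exp (-Real.pi * lp * m * r ^ 2) := by
  set I := ∫ v in Ioi 0, (1 - exp (-m * (1 - marcumQ (v / σ) (r / σ)))) * v
  have hpointwise (v : ℝ) (hv : 0 < v) :
      0 ≤ (1 - exp (-m * (1 - marcumQ (v / σ) (r / σ)))) * v ∧
        (1 - exp (-m * (1 - marcumQ (v / σ) (r / σ)))) * v ≤
          m * ((1 - marcumQ (v / σ) (r / σ)) * v) := by
    have ht : 0 ≤ m * (1 - marcumQ (v / σ) (r / σ)) :=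
      mul_nonneg hm.le (one_sub_marcumQ_div_nonneg hσ hr v)
    have hlower := one_sub_le_exp_neg (m * (1 - marcumQ (v / σ) (r / σ)))
    have hupper := exp_le_one_iff.2 (neg_nonpos.2 ht)
    rw [neg_mul]
    constructor <;> nlinarith
  have hI : I ≤ m * (r ^ 2 / 2) := by
    rw [← integral_one_sub_marcumQ_div_mul hσ hr, ← integral_const_mul]
    refine integral_mono_of_nonneg ?_ ((integrableOn_one_sub_marcumQ_div_mul hσ hr).const_mul m) ?_
    all_goals filter_upwards [self_mem_ae_restrict measurableSet_Ioi] with v hv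
    exacts [(hpointwise v hv).1, (hpointwise v hv).2]
  have := exp_le_exp.2 (show -π * lp * m * r ^ 2 ≤ -2 * π * lp * I by
    nlinarith [mul_pos pi_pos hlp])
  linarith
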